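/- Let d > 0 and let P₁, P₂, Q be paths (edge sets) with differentiable, non-decreasing, positive edge cost functions. Suppose τ_{P₁}(x) ≤ τ_{P₂}(x) and τ'_{P₁∩Q}(x) ≤ τ'_{P₂∩Q}(x) for all x ∈ [0,d] (i.e., P₁ dominates P₂). Then for all x ∈ [0,d], C_{P₁}(x) ≤ C_{P₂}(x), where C_P(x) = x·τ_{P\Q}(x) + (d-x)·τ_{Q\P}(d-x) + d·τ_{P∩Q}(d). -/

import Mathlib

/-!
Writing `τ_{P \ Q} = τ_P - τ_{P∩Q}` and `τ_{Q \ P} = τ_Q - τ_{P∩Q}`, the cost becomes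
`C_P(x) = x τ_P(x) + (d - x) τ_Q(d - x)
  + x (τ_{P∩Q}(d) - τ_{P∩Q}(x)) + (d - x) (τ_{P∩Q}(d) - τ_{P∩Q}(d - x))`.
The first term is smaller for `P₁` by the pointwise dominance, the second does not depend on `P`,
and the derivative condition makes `τ_{P₂∩Q} - τ_{P₁∩Q}` monotone on `[0, d]`, so the increments
of `τ_{P₁∩Q}` up to `d` are smaller than those of `τ_{P₂∩Q}`.
-/

open Finset Set

theorem Finset.sum_sdiff_eq_sub_sum_inter {ι M : Type*} [AddCommGroup M] [DecidableEq ι]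
    (s t : Finset ι) (f : ι → M) :
    ∑ i ∈ s \ t, f i = ∑ i ∈ s, f i - ∑ i ∈ s ∩ t, f i := by
  rw [← sum_inter_add_sum_sdiff s t f, add_sub_cancel_left]

theorem monotoneOn_sub_of_deriv_le {D : Set ℝ} (hD : Convex ℝ D) {f g : ℝ → ℝ}
    (hf : ContinuousOn f D) (hg : ContinuousOn g D)
    (hf' : DifferentiableOn ℝ f (interior D)) (hg' : DifferentiableOn ℝ g (interior D))
    (hle : ∀ x ∈ interior D, deriv f x ≤ deriv g x) :
    MonotoneOn (fun x => g x - f x) D := by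
  refine monotoneOn_of_deriv_nonneg hD (hg.sub hf) (hg'.sub hf') fun x hx => ?_
  have hfx := hf'.differentiableAt (isOpen_interior.mem_nhds hx)
  have hgx := hg'.differentiableAt (isOpen_interior.mem_nhds hx)
  rw [deriv_fun_sub hgx hfx]
  exact sub_nonneg.2 (hle x hx)

theorem stmt_9_general {E : Type*} [DecidableEq E] (d : ℝ)
    (P₁ P₂ Q : Finset E) (τ : E → ℝ → ℝ)
    (hdiff : ∀ e : E, Differentiable ℝ (τ e))
    (hdom₁ : ∀ x ∈ Set.Icc (0 : ℝ) d, (∑ e ∈ P₁, τ e x) ≤ ∑ e ∈ P₂, τ e x)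
    (hdom₂ : ∀ x ∈ Set.Icc (0 : ℝ) d,
      (∑ e ∈ P₁ ∩ Q, deriv (τ e) x) ≤ ∑ e ∈ P₂ ∩ Q, deriv (τ e) x) :
    ∀ x ∈ Set.Icc (0 : ℝ) d,
      x * (∑ e ∈ P₁ \ Q, τ e x) + (d - x) * (∑ e ∈ Q \ P₁, τ e (d - x))
          + d * (∑ e ∈ P₁ ∩ Q, τ e d) ≤
        x * (∑ e ∈ P₂ \ Q, τ e x) + (d - x) * (∑ e ∈ Q \ P₂, τ e (d - x))
          + d * (∑ e ∈ P₂ ∩ Q, τ e d) := by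
  rintro x ⟨hx0, hxd⟩
  have hsum_diff (P : Finset E) : Differentiable ℝ fun y => ∑ e ∈ P ∩ Q, τ e y :=
    Differentiable.fun_sum fun e _ => hdiff e
  have hgap : MonotoneOn (fun y => ∑ e ∈ P₂ ∩ Q, τ e y - ∑ e ∈ P₁ ∩ Q, τ e y) (Icc 0 d) := by
    refine monotoneOn_sub_of_deriv_le (convex_Icc 0 d) (hsum_diff P₁).continuous.continuousOn
      (hsum_diff P₂).continuous.continuousOn (hsum_diff P₁).differentiableOn
      (hsum_diff P₂).differentiableOn fun y hy => ?_
    simp only [deriv_fun_sum fun e _ => (hdiff e).differentiableAt]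
    exact hdom₂ y (interior_subset hy)
  have hd : d ∈ Icc 0 d := right_mem_Icc.2 (hx0.trans hxd)
  have hgap_x := hgap ⟨hx0, hxd⟩ hd hxd
  have hgap_dx := hgap ⟨sub_nonneg.2 hxd, sub_le_self d hx0⟩ hd (sub_le_self d hx0)
  rw [sum_sdiff_eq_sub_sum_inter P₁, sum_sdiff_eq_sub_sum_inter P₂, sum_sdiff_eq_sub_sum_inter Q,
    sum_sdiff_eq_sub_sum_inter Q, inter_comm Q P₁, inter_comm Q P₂]
  linarith [mul_le_mul_of_nonneg_left (hdom₁ x ⟨hx0, hxd⟩) hx0,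
    mul_le_mul_of_nonneg_left hgap_x hx0, mul_le_mul_of_nonneg_left hgap_dx (sub_nonneg.2 hxd)]

/-- If `P₁` dominates `P₂` (pointwise `τ_{P₁} ≤ τ_{P₂}` and `τ'_{P₁∩Q} ≤ τ'_{P₂∩Q}`
on `[0,d]`), then `C_{P₁}(x) ≤ C_{P₂}(x)` for all `x ∈ [0,d]`. -/
theorem stmt_9 {E : Type*} [DecidableEq E] (d : ℝ) (hd : 0 < d)
    (P₁ P₂ Q : Finset E) (τ : E → ℝ → ℝ)
    (hdiff : ∀ e : E, Differentiable ℝ (τ e))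
    (hmono : ∀ e : E, MonotoneOn (τ e) (Set.Icc 0 d))
    (hpos : ∀ e : E, ∀ x ∈ Set.Icc (0 : ℝ) d, 0 < τ e x)
    (hdom₁ : ∀ x ∈ Set.Icc (0 : ℝ) d, (∑ e ∈ P₁, τ e x) ≤ ∑ e ∈ P₂, τ e x)
    (hdom₂ : ∀ x ∈ Set.Icc (0 : ℝ) d,
      (∑ e ∈ P₁ ∩ Q, deriv (τ e) x) ≤ ∑ e ∈ P₂ ∩ Q, deriv (τ e) x) :
    ∀ x ∈ Set.Icc (0 : ℝ) d,
      x * (∑ e ∈ P₁ \ Q, τ e x) + (d - x) * (∑ e ∈ Q \ P₁, τ e (d - x))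
          + d * (∑ e ∈ P₁ ∩ Q, τ e d) ≤
        x * (∑ e ∈ P₂ \ Q, τ e x) + (d - x) * (∑ e ∈ Q \ P₂, τ e (d - x))
          + d * (∑ e ∈ P₂ ∩ Q, τ e d) :=
  stmt_9_general d P₁ P₂ Q τ hdiff hdom₁ hdom₂
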